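/- Let G be a connected leafless graph and let S be the set of all bridges of G. Then the induced group homomorphism Aut(G) → Aut(G/S) is injective. -/

import Mathlib

/-- A finite undirected multigraph (allowing loops and multiple edges) on a vertex type `V`
and an edge type `E`: the map `ends` assigns to each edge its unordered pair of endpoints
(a loop is an edge whose two endpoints coincide). -/
structure Multigraph (V E : Type) where
  ends : E → Sym2 V

namespace Multigraph

variable {V E : Type} {G : Multigraph V E}

/-- An automorphism of a multigraph: a pair of bijections on vertices and edges
commuting with the incidence map. -/
structure Aut (G : Multigraph V E) where
  toV : Equiv.Perm V
  toE : Equiv.Perm E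
  ends_map : ∀ e, G.ends (toE e) = Sym2.map toV (G.ends e)

theorem Aut.ext' {f g : G.Aut} (hV : f.toV = g.toV) (hE : f.toE = g.toE) : f = g := by
  cases f; cases g; simp_all

/-- The automorphisms of a multigraph form a group under composition. -/
instance : Group G.Aut where
  one := ⟨1, 1, fun e => by simp⟩
  mul f g := ⟨f.toV * g.toV, f.toE * g.toE, fun e => by
    simp only [Equiv.Perm.mul_apply, f.ends_map, g.ends_map, Sym2.map_map, Equiv.Perm.coe_mul]⟩
  inv f := ⟨f.toV⁻¹, f.toE⁻¹, fun e => by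
    have h := f.ends_map (f.toE⁻¹ e)
    rw [show f.toE (f.toE⁻¹ e) = e by simp] at h
    rw [h, Sym2.map_map]
    have : (⇑f.toV⁻¹ ∘ ⇑f.toV) = id := by ext v; simp
    rw [this, Sym2.map_id, id_eq]⟩
  mul_assoc f g h := Aut.ext' (mul_assoc _ _ _) (mul_assoc _ _ _)
  one_mul f := Aut.ext' (one_mul _) (one_mul _)
  mul_one f := Aut.ext' (mul_one _) (mul_one _)
  inv_mul_cancel f := Aut.ext' (inv_mul_cancel _) (inv_mul_cancel _)

/-- The relation on vertices generated by a set `S` of edges: two vertices are related if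
some edge of `S` joins them.  The vertex set of the contraction `G/S` is the quotient of
`V` by the equivalence relation generated by this relation. -/
def contractRel (G : Multigraph V E) (S : Set E) : V → V → Prop :=
  fun a b => ∃ e ∈ S, G.ends e = s(a, b)

/-- The contraction `G/S` of a multigraph `G` along a set `S` of edges: its vertices are
the equivalence classes of vertices of `G` under the equivalence relation generated by the
endpoints of edges of `S`, its edges are the edges of `G` not in `S`, and its incidence map
is induced by that of `G`. -/
def contract (G : Multigraph V E) (S : Set E) :
    Multigraph (Quot (G.contractRel S)) {e : E // e ∉ S} :=
  ⟨fun e => Sym2.map (Quot.mk (G.contractRel S)) (G.ends e.1)⟩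

end Multigraph

namespace Multigraph

variable {V E : Type} (G : Multigraph V E)

/-- Degree of the vertex `v` with respect to the edge set `F` (loops counted twice):
the number of edges of `F` incident to `v`, plus the number of loops of `F` at `v`. -/
noncomputable def degIn (F : Set E) (v : V) : ℕ :=
  {e ∈ F | v ∈ G.ends e}.ncard + {e ∈ F | G.ends e = s(v, v)}.ncard

/-- Degree of a vertex (loops counted twice). -/
noncomputable def degree (v : V) : ℕ := G.degIn Set.univ v

/-- A graph is leafless if every vertex has degree at least two. -/
def Leafless : Prop := ∀ v, 2 ≤ G.degree v

/-- Adjacency: there is an edge with endpoints `u`, `v`. -/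
def Adj (u v : V) : Prop := ∃ e, G.ends e = s(u, v)

/-- A graph is connected if it is nonempty and every two vertices are joined by a walk. -/
def Connected : Prop := Nonempty V ∧ ∀ u v : V, Relation.ReflTransGen G.Adj u v

/-- Adjacency using only edges outside the edge set `F`. -/
def AdjOff (F : Set E) (u v : V) : Prop := ∃ e, e ∉ F ∧ G.ends e = s(u, v)

/-- An edge is a bridge if its endpoints are not joined by a walk avoiding it;
equivalently, its deletion increases the number of connected components. -/
def IsBridge (e : E) : Prop :=
  ∃ u v, G.ends e = s(u, v) ∧ ¬ Relation.ReflTransGen (G.AdjOff {e}) u v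

end Multigraph

/-!
An automorphism `f` in the kernel fixes every non-bridge edge and keeps each vertex in its
class, i.e. joined to it by a walk of bridges. A vertex on no bridge is alone in its class, so it
is fixed; it remains to see that `f` fixes every bridge `b` and both its endpoints.

By finiteness and leaflessness, each side of `b` (a component of `G - b`) contains an endpoint
`p` of a non-bridge edge `e`; as `f` fixes `e`, `f p` lies on the side of `f b` containing `p`.
If `f b ≠ b`, take the side `X` of `b` not containing `f b` and such a `p ∈ X`: then `X`
together with the far endpoint of `b` lies inside the side of `f b` containing `p`, which is
`f X` and has the same size as `X`. So `f b = b`; then `f` preserves the sides of `b`, so it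
cannot swap the endpoints of `b`.
-/

namespace Multigraph

variable {V E : Type} {G : Multigraph V E}

instance (F : Set E) : Std.Symm (G.AdjOff F) :=
  ⟨fun _ _ ⟨e, he, h⟩ => ⟨e, he, h.trans Sym2.eq_swap⟩⟩

def ReachOff (G : Multigraph V E) (b : E) : V → V → Prop :=
  Relation.ReflTransGen (G.AdjOff {b})

namespace ReachOff

variable {b c : E} {u v w : V}

theorem refl (u : V) : G.ReachOff b u u := Relation.ReflTransGen.refl

theorem symm (h : G.ReachOff b u v) : G.ReachOff b v u :=
  Std.Symm.symm (r := Relation.ReflTransGen (G.AdjOff {b})) _ _ h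

theorem trans (h₁ : G.ReachOff b u v) (h₂ : G.ReachOff b v w) : G.ReachOff b u w :=
  Relation.ReflTransGen.trans h₁ h₂

theorem of_mem_ends (hcb : c ≠ b) (hu : u ∈ G.ends c) (hv : v ∈ G.ends c) :
    G.ReachOff b u v := by
  obtain ⟨u', hc⟩ := Sym2.mem_iff_exists.mp hu
  have hstep : G.ReachOff b u u' := .single ⟨c, hcb, hc⟩
  rw [hc, Sym2.mem_iff] at hv
  rcases hv with rfl | rfl
  exacts [refl v, hstep]

/-- A walk avoiding `b` stays on the `w`-side of `b`, which contains no endpoint of `c`. -/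
theorem of_forall_ends_not (h : G.ReachOff b u w)
    (hc : ∀ z ∈ G.ends c, ¬ G.ReachOff b z w) : G.ReachOff c u w := by
  induction h using Relation.ReflTransGen.head_induction_on with
  | refl => exact refl w
  | head hadj hrest ih =>
    obtain ⟨e, heb, he⟩ := hadj
    refine Relation.ReflTransGen.head ⟨e, ?_, he⟩ ih
    rintro rfl
    exact hc _ (he ▸ Sym2.mem_mk_left _ _) (Relation.ReflTransGen.head ⟨_, heb, he⟩ hrest)

theorem setOf_eq (h : G.ReachOff b v w) :
    {u | G.ReachOff b u v} = {u | G.ReachOff b u w} :=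
  Set.ext fun _ => ⟨fun hu => hu.trans h, fun hu => hu.trans h.symm⟩

end ReachOff

theorem IsBridge.not_reachOff {b : E} {x y : V} (hb : G.IsBridge b)
    (hxy : G.ends b = s(x, y)) : ¬ G.ReachOff b x y := by
  obtain ⟨u, v, huv, hn⟩ := hb
  rcases Sym2.eq_iff.mp (huv.symm.trans hxy) with ⟨rfl, rfl⟩ | ⟨rfl, rfl⟩
  exacts [hn, fun h => hn h.symm]

theorem exists_ends_eq_ne (hleaf : G.Leafless) {y : V} (hy : ∀ e, y ∈ G.ends e → G.IsBridge e)
    (x : V) : ∃ b z, G.ends b = s(y, z) ∧ z ≠ x := by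
  have hloops : {e ∈ (Set.univ : Set E) | G.ends e = s(y, y)} = ∅ :=
    Set.eq_empty_of_forall_notMem fun e ⟨_, he⟩ =>
      (hy e (he ▸ Sym2.mem_mk_left y y)).not_reachOff he (.refl y)
  have hdeg := hleaf y
  rw [degree, degIn, hloops, Set.ncard_empty, add_zero] at hdeg
  obtain ⟨e₁, -, he₁⟩ :=
    Set.nonempty_of_ncard_ne_zero (s := {e ∈ (Set.univ : Set E) | y ∈ G.ends e}) (by omega)
  obtain ⟨e₂, ⟨-, he₂⟩, hne⟩ := Set.exists_ne_of_one_lt_ncard hdeg e₁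
  obtain ⟨z₁, hz₁⟩ := Sym2.mem_iff_exists.mp he₁
  obtain ⟨z₂, hz₂⟩ := Sym2.mem_iff_exists.mp he₂
  by_cases hz₁x : z₁ = x
  · refine ⟨e₂, z₂, hz₂, fun hz₂x => ?_⟩
    have hparallel : G.ReachOff e₁ y z₁ := .of_mem_ends hne (hz₂ ▸ Sym2.mem_mk_left y z₂)
      (hz₂ ▸ hz₁x ▸ hz₂x ▸ Sym2.mem_mk_right y z₂)
    exact (hy e₁ he₁).not_reachOff hz₁ hparallel
  · exact ⟨e₁, z₁, hz₁, hz₁x⟩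

theorem exists_not_isBridge_reachOff [Finite V] (hleaf : G.Leafless) {b : E} {x y : V}
    (hxy : G.ends b = s(x, y)) :
    ∃ e, ¬ G.IsBridge e ∧ ∃ p ∈ G.ends e, G.ReachOff b p y := by
  -- If `y` lies on no non-bridge edge, cross a bridge `b' = yz` to the strictly smaller
  -- `z`-side of `b'`, which lies inside the `y`-side of `b`.
  induction hn : {u | G.ReachOff b u y}.ncard using Nat.strong_induction_on
    generalizing b x y with
  | _ n ih =>
  by_cases hy : ∃ e, ¬ G.IsBridge e ∧ y ∈ G.ends e
  · obtain ⟨e, he, hye⟩ := hy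
    exact ⟨e, he, y, hye, .refl y⟩
  obtain ⟨b', z, hb', hzx⟩ :=
    exists_ends_eq_ne hleaf (fun e hye => by_contra fun he => hy ⟨e, he, hye⟩) x
  have hbr' : G.IsBridge b' := by_contra fun he => hy ⟨b', he, hb' ▸ Sym2.mem_mk_left y z⟩
  have hyz : ¬ G.ReachOff b' y z := hbr'.not_reachOff hb'
  have hb'b : b' ≠ b := by
    rintro rfl
    rcases Sym2.eq_iff.mp (hb'.symm.trans hxy) with ⟨rfl, rfl⟩ | ⟨-, rfl⟩ <;> exact hzx rfl
  have hsub : {u | G.ReachOff b' u z} ⊆ {u | G.ReachOff b u y} := by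
    intro u hu
    refine (hu.of_forall_ends_not fun t ht htz => ?_).trans
      (.of_mem_ends hb'b (hb' ▸ Sym2.mem_mk_right y z) (hb' ▸ Sym2.mem_mk_left y z))
    rw [hxy, Sym2.mem_iff] at ht
    rcases ht with rfl | rfl
    · exact hyz ((ReachOff.of_mem_ends hb'b.symm (hxy ▸ Sym2.mem_mk_right t y)
        (hxy ▸ Sym2.mem_mk_left t y)).trans htz)
    · exact hyz htz
  have hlt : {u | G.ReachOff b' u z}.ncard < n :=
    hn ▸ Set.ncard_lt_ncard ⟨hsub, fun h => hyz (h (.refl y))⟩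
  obtain ⟨e, he, p, hpe, hp⟩ := ih _ hlt hb' rfl
  exact ⟨e, he, p, hpe, hsub hp⟩

theorem eq_or_mem_ends_of_eqvGen {S : Set E} {u w : V}
    (h : Relation.EqvGen (G.contractRel S) u w) :
    u = w ∨ (∃ e ∈ S, u ∈ G.ends e) ∧ ∃ e ∈ S, w ∈ G.ends e := by
  induction h with
  | rel u w huw =>
    obtain ⟨e, he, hends⟩ := huw
    exact .inr ⟨⟨e, he, hends ▸ Sym2.mem_mk_left u w⟩,
      ⟨e, he, hends ▸ Sym2.mem_mk_right u w⟩⟩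
  | refl => exact .inl rfl
  | symm _ _ _ ih => exact ih.imp Eq.symm And.symm
  | trans _ _ _ _ _ ih₁ ih₂ =>
    rcases ih₁ with rfl | h₁
    · exact ih₂
    rcases ih₂ with rfl | h₂
    · exact .inr h₁
    · exact .inr ⟨h₁.1, h₂.2⟩

namespace Aut

variable (f : G.Aut) {b : E} {u w : V}

@[simp] theorem one_toV : (1 : G.Aut).toV = 1 := rfl
@[simp] theorem one_toE : (1 : G.Aut).toE = 1 := rfl
@[simp] theorem inv_toV : f⁻¹.toV = f.toV⁻¹ := rfl
@[simp] theorem inv_toE : f⁻¹.toE = f.toE⁻¹ := rfl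

theorem reachOff_map (h : G.ReachOff b u w) :
    G.ReachOff (f.toE b) (f.toV u) (f.toV w) := by
  refine Relation.ReflTransGen.lift f.toV (fun a c ⟨e, he, hac⟩ => ⟨f.toE e, ?_, ?_⟩) _ _ h
  · simpa using he
  · rw [f.ends_map, hac, Sym2.map_mk]

theorem image_setOf_reachOff :
    f.toV '' {u | G.ReachOff b u w} = {u | G.ReachOff (f.toE b) u (f.toV w)} := by
  refine Set.Subset.antisymm (Set.image_subset_iff.mpr fun u hu => f.reachOff_map hu)
    fun u hu => ⟨f.toV⁻¹ u, ?_, by simp⟩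
  simpa using f⁻¹.reachOff_map hu

theorem ncard_setOf_reachOff :
    {u | G.ReachOff (f.toE b) u (f.toV w)}.ncard = {u | G.ReachOff b u w}.ncard := by
  rw [← f.image_setOf_reachOff, Set.ncard_image_of_injective _ f.toV.injective]

theorem exists_mem_ends_toE_reachOff [Finite V] {x y p : V} (hb : G.IsBridge b)
    (hxy : G.ends b = s(x, y)) (hne : f.toE b ≠ b) (hp : G.ReachOff b p x)
    (hfp : G.ReachOff (f.toE b) (f.toV p) p) : ∃ z ∈ G.ends (f.toE b), G.ReachOff b z x := by
  -- Otherwise the `x`-side of `b` lies strictly inside the `x`-side of `f b`, its image under `f`.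
  by_contra! hc
  have hsub : {u | G.ReachOff b u x} ⊆ {u | G.ReachOff (f.toE b) u x} :=
    fun u hu => hu.of_forall_ends_not hc
  have hyx : G.ReachOff (f.toE b) y x :=
    .of_mem_ends hne.symm (hxy ▸ Sym2.mem_mk_right x y) (hxy ▸ Sym2.mem_mk_left x y)
  have hlt := Set.ncard_lt_ncard (⟨hsub, fun h => hb.not_reachOff hxy (h hyx).symm⟩ :
    {u | G.ReachOff b u x} ⊂ {u | G.ReachOff (f.toE b) u x})
  rw [ReachOff.setOf_eq ((hsub hp).symm.trans hfp.symm), f.ncard_setOf_reachOff,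
    ReachOff.setOf_eq hp] at hlt
  exact lt_irrefl _ hlt

theorem toE_eq_self_of_reachOff [Finite V] {x y p q : V} (hb : G.IsBridge b)
    (hxy : G.ends b = s(x, y)) (hp : G.ReachOff b p x) (hfp : G.ReachOff (f.toE b) (f.toV p) p)
    (hq : G.ReachOff b q y) (hfq : G.ReachOff (f.toE b) (f.toV q) q) : f.toE b = b := by
  by_contra hne
  obtain ⟨z, hz, hzx⟩ := f.exists_mem_ends_toE_reachOff hb hxy hne hp hfp
  obtain ⟨z', hz', hz'y⟩ :=
    f.exists_mem_ends_toE_reachOff hb (hxy.trans Sym2.eq_swap) hne hq hfq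
  exact hb.not_reachOff hxy (hzx.symm.trans ((ReachOff.of_mem_ends hne hz hz').trans hz'y))

variable [Finite V] (hleaf : G.Leafless) (hfix : ∀ e, ¬ G.IsBridge e → f.toE e = e)
include hleaf hfix

theorem exists_reachOff_toV_reachOff {x y : V} (hb : G.IsBridge b) (hxy : G.ends b = s(x, y)) :
    ∃ p, G.ReachOff b p y ∧ G.ReachOff (f.toE b) (f.toV p) p := by
  obtain ⟨e, he, p, hpe, hp⟩ := exists_not_isBridge_reachOff hleaf hxy
  have hfe := hfix e he
  have hne : e ≠ f.toE b := fun h => he (f.toE.injective (hfe.trans h) ▸ hb)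
  refine ⟨p, hp, .of_mem_ends hne ?_ hpe⟩
  rw [← hfe, f.ends_map]
  exact Sym2.mem_map.mpr ⟨p, hpe, rfl⟩

theorem toE_eq_self_of_isBridge (hb : G.IsBridge b) : f.toE b = b := by
  obtain ⟨x, y, hxy, -⟩ := id hb
  obtain ⟨p, hp, hfp⟩ := f.exists_reachOff_toV_reachOff hleaf hfix hb (hxy.trans Sym2.eq_swap)
  obtain ⟨q, hq, hfq⟩ := f.exists_reachOff_toV_reachOff hleaf hfix hb hxy
  exact f.toE_eq_self_of_reachOff hb hxy hp hfp hq hfq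

theorem toV_eq_self_of_mem_ends (hb : G.IsBridge b) {v : V} (hv : v ∈ G.ends b) :
    f.toV v = v := by
  obtain ⟨w, hvw⟩ := Sym2.mem_iff_exists.mp hv
  have hfb := f.toE_eq_self_of_isBridge hleaf hfix hb
  have hends := f.ends_map b
  rw [hfb, hvw, Sym2.map_mk] at hends
  rcases Sym2.eq_iff.mp hends with ⟨h, -⟩ | ⟨-, hfv⟩
  · exact h.symm
  obtain ⟨p, hp, hfp⟩ := f.exists_reachOff_toV_reachOff hleaf hfix hb (hvw.trans Sym2.eq_swap)
  have hfpw := f.reachOff_map hp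
  rw [hfb, ← hfv] at hfpw
  rw [hfb] at hfp
  exact absurd (hp.symm.trans (hfp.symm.trans hfpw)) (hb.not_reachOff hvw)

end Aut

end Multigraph

theorem aut_to_aut_contract_bridges_injective_general {V E : Type} [Fintype V]
    (G : Multigraph V E) (hleaf : G.Leafless)
    (Φ : G.Aut →* (G.contract {e | G.IsBridge e}).Aut)
    (hΦV : ∀ (f : G.Aut) (v : V),
      (Φ f).toV (Quot.mk (G.contractRel {e | G.IsBridge e}) v) =
        Quot.mk (G.contractRel {e | G.IsBridge e}) (f.toV v))
    (hΦE : ∀ (f : G.Aut) (e : {e : E // e ∉ {e | G.IsBridge e}}),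
      ((Φ f).toE e : E) = f.toE (e : E)) :
    Function.Injective Φ := by
  refine (injective_iff_map_eq_one Φ).mpr fun f hf => ?_
  have hfix : ∀ e, ¬ G.IsBridge e → f.toE e = e := fun e he => by
    simpa [hf] using (hΦE f ⟨e, he⟩).symm
  refine Multigraph.Aut.ext' (Equiv.ext fun v => ?_) (Equiv.ext fun e => ?_)
  · have hclass : Relation.EqvGen (G.contractRel {e | G.IsBridge e}) v (f.toV v) :=
      Quot.eq.mp (by simpa [hf] using hΦV f v)
    rcases Multigraph.eq_or_mem_ends_of_eqvGen hclass with h | ⟨⟨b, hb, hv⟩, -⟩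
    · exact h.symm
    · exact f.toV_eq_self_of_mem_ends hleaf hfix hb hv
  · by_cases he : G.IsBridge e
    · exact f.toE_eq_self_of_isBridge hleaf hfix he
    · exact hfix e he

/-- Let `G` be a connected leafless graph and `S` the set of all bridges
of `G` (a set invariant under every automorphism).  Then the induced group homomorphism
`Aut(G) → Aut(G/S)` — i.e., any group homomorphism commuting with the projection
`V_G → V_{G/S}` and with the inclusion `E_{G/S} → E_G` — is injective. -/
theorem aut_to_aut_contract_bridges_injective {V E : Type} [Fintype V] [Fintype E]
    (G : Multigraph V E) (hconn : G.Connected) (hleaf : G.Leafless)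
    (Φ : G.Aut →* (G.contract {e | G.IsBridge e}).Aut)
    (hΦV : ∀ (f : G.Aut) (v : V),
      (Φ f).toV (Quot.mk (G.contractRel {e | G.IsBridge e}) v) =
        Quot.mk (G.contractRel {e | G.IsBridge e}) (f.toV v))
    (hΦE : ∀ (f : G.Aut) (e : {e : E // e ∉ {e | G.IsBridge e}}),
      ((Φ f).toE e : E) = f.toE (e : E)) :
    Function.Injective Φ :=
  aut_to_aut_contract_bridges_injective_general G hleaf Φ hΦV hΦE
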